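/- Let σ > 0, let Φ, φ be the standard normal CDF and PDF, let G be a C¹ CDF on [0, d̄] with d̄ ≥ 1 and G(2B(s)−1) < 1 where B(s) = 1/(1+e^{−2sσ}). Define H(s) = (Φ(s+σ) − Φ(s−σ))/(1 − G(2B(s)−1)). Then H'(0) > 0; in particular there exists C(σ) > 0 such that H is strictly increasing on [0, C(σ)]. -/

import Mathlib

noncomputable def phi (x : ℝ) : ℝ := (Real.sqrt (2 * Real.pi))⁻¹ * Real.exp (-x^2/2)

noncomputable def PhiCdf (x : ℝ) : ℝ := ∫ t in Set.Iic x, phi t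

/-!
At `s = 0` the numerator `Φ(s+σ) - Φ(s-σ)` is stationary, because `φ` is even, while the
denominator `1 - G(2B(s) - 1)` has derivative `-G'(0) σ < 0`. The quotient rule then gives
`H'(0) = (Φ(σ) - Φ(-σ)) G'(0) σ / (1 - G 0)² > 0`. Since `H` is `C¹`, its derivative stays
positive on a neighbourhood of `0`, where `H` is therefore strictly increasing.
-/

open Real Set

lemma continuous_phi : Continuous phi := by
  unfold phi; fun_prop

lemma phi_pos (x : ℝ) : 0 < phi x := by
  unfold phi; positivity

lemma phi_neg (x : ℝ) : phi (-x) = phi x := by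
  simp only [phi, neg_sq]

lemma integrable_phi : MeasureTheory.Integrable phi := by
  have h : phi = fun x => (√(2 * π))⁻¹ * exp (-(1 / 2 : ℝ) * x ^ 2) := by
    funext x; unfold phi; ring_nf
  rw [h]
  exact (integrable_exp_neg_mul_sq (by norm_num)).const_mul _

lemma hasDerivAt_PhiCdf (x : ℝ) : HasDerivAt PhiCdf (phi x) x := by
  have hsplit : PhiCdf = fun y => PhiCdf 0 + ∫ t in (0 : ℝ)..y, phi t := by
    funext y
    have := intervalIntegral.integral_Iic_sub_Iic (f := phi) (a := 0) (b := y)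
      integrable_phi.integrableOn integrable_phi.integrableOn
    unfold PhiCdf
    linarith
  rw [hsplit]
  exact (intervalIntegral.integral_hasDerivAt_right integrable_phi.intervalIntegrable
    continuous_phi.aestronglyMeasurable.stronglyMeasurableAtFilter
    continuous_phi.continuousAt).const_add _

lemma deriv_PhiCdf : deriv PhiCdf = phi :=
  funext fun x => (hasDerivAt_PhiCdf x).deriv

lemma contDiff_PhiCdf : ContDiff ℝ 1 PhiCdf :=
  contDiff_one_iff_deriv.2
    ⟨fun x => (hasDerivAt_PhiCdf x).differentiableAt, deriv_PhiCdf ▸ continuous_phi⟩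

lemma strictMono_PhiCdf : StrictMono PhiCdf :=
  strictMono_of_deriv_pos fun x => deriv_PhiCdf ▸ phi_pos x

lemma exists_strictMonoOn_Icc_of_deriv_pos {f : ℝ → ℝ} {a : ℝ} (hf : ContDiff ℝ 1 f)
    (ha : 0 < deriv f a) : ∃ C > 0, StrictMonoOn f (Icc a (a + C)) := by
  have hnhds : {x | 0 < deriv f x} ∈ nhds a :=
    (isOpen_lt continuous_const (hf.continuous_deriv le_rfl)).mem_nhds ha
  obtain ⟨C, hC, hIcc⟩ := (Metric.nhds_basis_closedBall.mem_iff).1 hnhds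
  refine ⟨C, hC, strictMonoOn_of_deriv_pos (convex_Icc _ _) hf.continuous.continuousOn
    fun x hx => hIcc ?_⟩
  rw [Real.closedBall_eq_Icc]
  exact Icc_subset_Icc (by linarith) le_rfl (interior_subset hx)

lemma deriv_div_pos_of_hasDerivAt_num_zero {N D : ℝ → ℝ} {D' x : ℝ}
    (hN : HasDerivAt N 0 x) (hD : HasDerivAt D D' x) (hNx : 0 < N x) (hDx : 0 < D x)
    (hD' : D' < 0) : 0 < deriv (fun s => N s / D s) x := by
  rw [(hN.fun_div hD hDx.ne').deriv, zero_mul, zero_sub, neg_div]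
  exact neg_pos.2 (div_neg_of_neg_of_pos (mul_neg_of_pos_of_neg hNx hD') (by positivity))

lemma hasDerivAt_PhiCdf_add_sub_PhiCdf_sub_zero (σ : ℝ) :
    HasDerivAt (fun s => PhiCdf (s + σ) - PhiCdf (s - σ)) 0 0 := by
  have := ((hasDerivAt_PhiCdf (0 + σ)).comp_add_const 0 σ).fun_sub
    ((hasDerivAt_PhiCdf (0 - σ)).comp_sub_const 0 σ)
  rwa [zero_add, zero_sub, phi_neg, sub_self] at this

lemma contDiff_logistic {n : WithTop ℕ∞} (σ : ℝ) :
    ContDiff ℝ n fun s => 1 / (1 + exp (-2 * s * σ)) :=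
  contDiff_const.div (by fun_prop) fun _ => by positivity

lemma hasDerivAt_logistic_zero (σ : ℝ) :
    HasDerivAt (fun s => 1 / (1 + exp (-2 * s * σ))) (σ / 2) 0 := by
  have hlin : HasDerivAt (fun s : ℝ => -2 * s * σ) (-2 * σ) 0 := by
    simpa using ((hasDerivAt_id (0 : ℝ)).const_mul (-2)).mul_const σ
  simp only [one_div]
  refine ((hlin.exp.const_add 1).inv (by positivity)).congr_deriv ?_
  norm_num; ring

theorem stmt_18_general (σ : ℝ) (hσ : 0 < σ)
    (G : ℝ → ℝ) (hGC : ContDiff ℝ 1 G)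
    (B : ℝ → ℝ) (hB : ∀ s, B s = 1 / (1 + Real.exp (-2 * s * σ)))
    (hGlt : ∀ s, G (2 * B s - 1) < 1)
    (hG' : 0 < deriv G 0)
    (H : ℝ → ℝ)
    (hH : ∀ s, H s = (PhiCdf (s + σ) - PhiCdf (s - σ)) / (1 - G (2 * B s - 1))) :
    0 < deriv H 0 ∧ ∃ C > 0, StrictMonoOn H (Set.Icc 0 C) := by
  have hB' : B = fun s => 1 / (1 + exp (-2 * s * σ)) := funext hB
  have hD : ∀ s, 0 < 1 - G (2 * B s - 1) := fun s => sub_pos.2 (hGlt s)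
  have hH' : H = fun s => (PhiCdf (s + σ) - PhiCdf (s - σ)) / (1 - G (2 * B s - 1)) :=
    funext hH
  have hHC : ContDiff ℝ 1 H := by
    have hlog := contDiff_logistic (n := 1) σ
    rw [hH']
    refine ((contDiff_PhiCdf.comp (by fun_prop)).sub (contDiff_PhiCdf.comp (by fun_prop))).div
      ?_ fun s => (hD s).ne'
    rw [hB']
    fun_prop
  have hg0 : 2 * B 0 - 1 = 0 := by rw [hB]; norm_num
  have hg : HasDerivAt (fun s => 2 * B s - 1) σ 0 := by
    simp only [hB]
    exact (((hasDerivAt_logistic_zero σ).const_mul 2).sub_const 1).congr_deriv (by ring)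
  have hDen : HasDerivAt (fun s => 1 - G (2 * B s - 1)) (-(deriv G 0 * σ)) 0 := by
    have := ((hGC.differentiable one_ne_zero _).hasDerivAt.comp 0 hg).const_sub 1
    rwa [hg0] at this
  have hderiv : 0 < deriv H 0 := by
    rw [hH']
    exact deriv_div_pos_of_hasDerivAt_num_zero (hasDerivAt_PhiCdf_add_sub_PhiCdf_sub_zero σ) hDen
      (by simpa using strictMono_PhiCdf (neg_lt_self hσ)) (hD 0) (by nlinarith)
  exact ⟨hderiv, by simpa using exists_strictMonoOn_Icc_of_deriv_pos hHC hderiv⟩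

theorem stmt_18 (σ : ℝ) (hσ : 0 < σ) (dbar : ℝ) (hd : 1 ≤ dbar)
    (G : ℝ → ℝ) (hGC : ContDiff ℝ 1 G) (hGmono : Monotone G)
    (hGmaps : Set.MapsTo G (Set.Icc 0 dbar) (Set.Icc 0 1))
    (B : ℝ → ℝ) (hB : ∀ s, B s = 1 / (1 + Real.exp (-2 * s * σ)))
    (hGlt : ∀ s, G (2 * B s - 1) < 1)
    (hG' : 0 < deriv G 0)
    (H : ℝ → ℝ)
    (hH : ∀ s, H s = (PhiCdf (s + σ) - PhiCdf (s - σ)) / (1 - G (2 * B s - 1))) :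
    0 < deriv H 0 ∧ ∃ C > 0, StrictMonoOn H (Set.Icc 0 C) :=
  stmt_18_general σ hσ G hGC B hB hGlt hG' H hH
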